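/- arXiv:2605.04826 — 6 statements merged into one kernel-verified Lean document; each statement's English description precedes it below -/
import Mathlib

section
/- Let V_0 ≤ V_1 ≤ … ≤ V_{N−1} be strings listed in lexicographically nondecreasing order, let i ∈ {0,…,N−1}, and let J ⊆ {0,…,N−1} \ {i} be nonempty. Let p = max{j ∈ J : j < i} and s = min{j ∈ J : j > i}, whichever of these exist. Then max_{j ∈ J} LCP(V_i,V_j) equals the maximum of LCP(V_i,V_p) and LCP(V_i,V_s), taken over those of p and s that exist. In other words, among all strings V_j with j ∈ J, the maximum length of a common prefix with V_i is attained by one of the elements of J closest to i in the sorted order. -/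
/-- Length of the longest common prefix of two strings (lists). -/
def lcp {α : Type*} [DecidableEq α] : List α → List α → ℕ
  | a :: s, b :: t => if a = b then lcp s t + 1 else 0
  | _, _ => 0

lemma lcp_comm {α : Type*} [DecidableEq α] : ∀ A B : List α, lcp A B = lcp B A
  | a :: s, b :: t => by
    by_cases h : a = b
    · simp [lcp, h, lcp_comm s t]
    · simp [lcp, h, Ne.symm h]
  | [], [] => rfl
  | [], _ :: _ => rfl
  | _ :: _, [] => rfl

lemma not_cons_le_nil {α : Type*} [LinearOrder α] (a : α) (A : List α) :
    ¬ (a :: A ≤ ([] : List α)) := by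
  rw [le_iff_lt_or_eq]
  rintro (h | h)
  · have h' : List.Lex (· < ·) (a :: A) [] := h
    cases h'
  · simp at h

lemma cons_le_cons_inv {α : Type*} [LinearOrder α] {a b : α} {A B : List α}
    (h : a :: A ≤ b :: B) : a < b ∨ (a = b ∧ A ≤ B) := by
  rw [le_iff_lt_or_eq] at h
  rcases h with h | h
  · have h' : List.Lex (· < ·) (a :: A) (b :: B) := h
    cases h' with
    | cons h => exact Or.inr ⟨rfl, le_of_lt (show A < B from h)⟩
    | rel h => exact Or.inl h
  · injection h with h1 h2
    exact Or.inr ⟨h1, h2.le⟩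

lemma lcp_squeeze {α : Type*} [LinearOrder α] :
    ∀ A B C : List α, A ≤ B → B ≤ C → lcp A C ≤ lcp A B ∧ lcp A C ≤ lcp B C
  | a :: A, B, c :: C, hAB, hBC => by
    by_cases hac : a = c
    · subst hac
      match B with
      | [] => exact absurd hAB (not_cons_le_nil _ _)
      | b :: B =>
        rcases cons_le_cons_inv hAB with h1 | ⟨h1, h1'⟩ <;>
          rcases cons_le_cons_inv hBC with h2 | ⟨h2, h2'⟩
        · exact absurd (h1.trans h2) (lt_irrefl _)
        · subst h2; exact absurd h1 (lt_irrefl _)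
        · subst h1; exact absurd h2 (lt_irrefl _)
        · subst h1
          have := lcp_squeeze A B C h1' h2'
          simp [lcp, this.1, this.2]
    · simp [lcp, hac]
  | [], _, _, _, _ => by simp [lcp]
  | _ :: _, _, [], _, _ => by simp [lcp]

theorem max_lcp_attained_at_closest {α : Type*} [LinearOrder α]
    (N : ℕ) (V : Fin N → List α)
    (hsorted : ∀ i j : Fin N, i ≤ j → V i ≤ V j)
    (i : Fin N) (J : Finset (Fin N)) (hJne : J.Nonempty) (hiJ : i ∉ J) :
    -- both a predecessor and a successor in J exist
    (∀ (hp : (J.filter (fun j => j < i)).Nonempty)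
       (hs : (J.filter (fun j => i < j)).Nonempty),
      J.sup (fun j => lcp (V i) (V j)) =
        max (lcp (V i) (V ((J.filter (fun j => j < i)).max' hp)))
            (lcp (V i) (V ((J.filter (fun j => i < j)).min' hs)))) ∧
    -- only a predecessor exists
    (∀ (hp : (J.filter (fun j => j < i)).Nonempty),
      J.filter (fun j => i < j) = ∅ →
      J.sup (fun j => lcp (V i) (V j)) =
        lcp (V i) (V ((J.filter (fun j => j < i)).max' hp))) ∧
    -- only a successor exists
    (∀ (hs : (J.filter (fun j => i < j)).Nonempty),
      J.filter (fun j => j < i) = ∅ →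
      J.sup (fun j => lcp (V i) (V j)) =
        lcp (V i) (V ((J.filter (fun j => i < j)).min' hs))) := by
  have hbelow : ∀ (hp : (J.filter (fun j => j < i)).Nonempty) (j : Fin N),
      j ∈ J → j < i →
      lcp (V i) (V j) ≤ lcp (V i) (V ((J.filter (fun j => j < i)).max' hp)) := by
    intro hp j hjJ hji
    have hjp : j ≤ (J.filter (fun j => j < i)).max' hp :=
      Finset.le_max' _ j (by simp only [Finset.mem_filter]; exact ⟨hjJ, hji⟩)
    have hpi : (J.filter (fun j => j < i)).max' hp < i :=
      (Finset.mem_filter.1 ((J.filter (fun j => j < i)).max'_mem hp)).2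
    have h := (lcp_squeeze (V j) (V _) (V i) (hsorted _ _ hjp) (hsorted _ _ hpi.le)).2
    rw [lcp_comm (V i) (V j), lcp_comm (V i)]
    exact h
  have habove : ∀ (hs : (J.filter (fun j => i < j)).Nonempty) (j : Fin N),
      j ∈ J → i < j →
      lcp (V i) (V j) ≤ lcp (V i) (V ((J.filter (fun j => i < j)).min' hs)) := by
    intro hs j hjJ hij
    have hsj : (J.filter (fun j => i < j)).min' hs ≤ j :=
      Finset.min'_le _ j (by simp only [Finset.mem_filter]; exact ⟨hjJ, hij⟩)
    have his : i < (J.filter (fun j => i < j)).min' hs :=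
      (Finset.mem_filter.1 ((J.filter (fun j => i < j)).min'_mem hs)).2
    exact (lcp_squeeze (V i) (V _) (V j) (hsorted _ _ his.le) (hsorted _ _ hsj)).1
  have hpJ : ∀ (hp : (J.filter (fun j => j < i)).Nonempty),
      (J.filter (fun j => j < i)).max' hp ∈ J :=
    fun hp => (Finset.mem_filter.1 ((J.filter (fun j => j < i)).max'_mem hp)).1
  have hsJ : ∀ (hs : (J.filter (fun j => i < j)).Nonempty),
      (J.filter (fun j => i < j)).min' hs ∈ J :=
    fun hs => (Finset.mem_filter.1 ((J.filter (fun j => i < j)).min'_mem hs)).1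
  refine ⟨fun hp hs => ?_, fun hp hempty => ?_, fun hs hempty => ?_⟩
  · apply le_antisymm
    · apply Finset.sup_le
      intro j hjJ
      rcases lt_or_gt_of_ne (fun h : j = i => hiJ (h ▸ hjJ)) with hji | hij
      · exact le_max_of_le_left (hbelow hp j hjJ hji)
      · exact le_max_of_le_right (habove hs j hjJ hij)
    · exact max_le (Finset.le_sup (f := fun j => lcp (V i) (V j)) (hpJ hp)) (Finset.le_sup (f := fun j => lcp (V i) (V j)) (hsJ hs))
  · apply le_antisymm
    · apply Finset.sup_le
      intro j hjJ
      rcases lt_or_gt_of_ne (fun h : j = i => hiJ (h ▸ hjJ)) with hji | hij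
      · exact hbelow hp j hjJ hji
      · refine absurd (show j ∈ J.filter (fun j => i < j) by simp only [Finset.mem_filter]; exact ⟨hjJ, hij⟩) (by simp [hempty])
    · exact Finset.le_sup (f := fun j => lcp (V i) (V j)) (hpJ hp)
  · apply le_antisymm
    · apply Finset.sup_le
      intro j hjJ
      rcases lt_or_gt_of_ne (fun h : j = i => hiJ (h ▸ hjJ)) with hji | hij
      · refine absurd (show j ∈ J.filter (fun j => j < i) by simp only [Finset.mem_filter]; exact ⟨hjJ, hji⟩) (by simp [hempty])
      · exact habove hs j hjJ hij
    · exact Finset.le_sup (f := fun j => lcp (V i) (V j)) (hsJ hs)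
end

section
/- Let P be a finite multiset of points in ℤ≥0² whose primary skyline is nonempty, and let (x*,y*) be a point of the primary skyline with minimal sum of coordinates x*+y*. Then either x* = 0 or there exists a point (x,y) ∈ P with x = x*−1. -/
/-- `z` is dominated by `p` (in `ℤ≥0²`, modeled as `ℕ × ℕ`). -/
def Dominated (z p : ℕ × ℕ) : Prop := z.1 ≤ p.1 ∧ z.2 ≤ p.2

instance (z p : ℕ × ℕ) : Decidable (Dominated z p) := instDecidableAnd

/-- The primary skyline of a finite multiset of points: the points of `ℕ × ℕ`
dominated by exactly one element of `P` (counted with multiplicity). -/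
def PrimarySkyline (P : Multiset (ℕ × ℕ)) : Set (ℕ × ℕ) :=
  {z | (P.filter (fun p => Dominated z p)).card = 1}

theorem skyline_min_point_horizontal (P : Multiset (ℕ × ℕ))
    (x y : ℕ) (hsky : (x, y) ∈ PrimarySkyline P)
    (hmin : ∀ z ∈ PrimarySkyline P, x + y ≤ z.1 + z.2) :
    x = 0 ∨ ∃ p ∈ P, p.1 + 1 = x := by
  by_cases hx : x = 0
  · exact Or.inl hx
  right
  by_contra h
  push_neg at h
  have hfe : P.filter (fun p => Dominated (x - 1, y) p)
      = P.filter (fun p => Dominated (x, y) p) := by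
    apply Multiset.filter_congr
    intro p hp
    have hne : p.1 + 1 ≠ x := h p hp
    simp only [Dominated]
    constructor
    · rintro ⟨h1, h2⟩; exact ⟨by omega, h2⟩
    · rintro ⟨h1, h2⟩; exact ⟨by omega, h2⟩
  have hsky' : (x - 1, y) ∈ PrimarySkyline P := by
    simp only [PrimarySkyline, Set.mem_setOf_eq] at hsky ⊢
    rw [hfe]; exact hsky
  have := hmin _ hsky'
  simp at this
  omega
end

section
/- Let P be a finite multiset of points in ℤ≥0² whose primary skyline is nonempty, and let (x*,y*) be a point of the primary skyline with minimal sum of coordinates x*+y*. Let P' be the submultiset of P consisting of the points (x,y) ∈ P with x ≥ x*, and let p_u be the unique element of P that dominates (x*,y*) (this element belongs to P'). If |P'| = 1, then y* = 0. Otherwise, y* = y' + 1, where y' is the maximum y-coordinate among the elements of P' ∖ {p_u} (removing one copy of p_u). -/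
theorem skyline_min_point_vertical (P : Multiset (ℕ × ℕ))
    (x y : ℕ) (hsky : (x, y) ∈ PrimarySkyline P)
    (hmin : ∀ z ∈ PrimarySkyline P, x + y ≤ z.1 + z.2)
    (P' : Multiset (ℕ × ℕ)) (hP' : P' = P.filter (fun p => x ≤ p.1))
    (pu : ℕ × ℕ) (hpu : pu ∈ P) (hdom : Dominated (x, y) pu) :
    (P'.card = 1 → y = 0) ∧
    (P'.card ≠ 1 → y = ((P'.erase pu).map Prod.snd).sup + 1) := by
  have h1 : (P.filter (fun p => Dominated (x, y) p)).card = 1 := hsky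
  have hpuP' : pu ∈ P' := by
    rw [hP']; exact Multiset.mem_filter.2 ⟨hpu, hdom.1⟩
  have hres : ∀ y' : ℕ, P.filter (fun p => Dominated (x, y') p)
      = P'.filter (fun p => Dominated (x, y') p) := by
    intro y'
    rw [hP', Multiset.filter_filter]
    apply Multiset.filter_congr
    intro p _
    constructor
    · intro h; exact ⟨h, h.1⟩
    · intro h; exact h.1
  have hns : ∀ y' : ℕ, y' < y →
      (P'.filter (fun p => Dominated (x, y') p)).card ≠ 1 := by
    intro y' hy' hc
    rw [← hres] at hc
    have := hmin (x, y') hc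
    omega
  constructor
  · intro hcard
    by_contra hy
    have hy1 : 1 ≤ y := Nat.one_le_iff_ne_zero.2 hy
    have hP'eq : P' = {pu} := by
      obtain ⟨a, ha⟩ := Multiset.card_eq_one.1 hcard
      have hpa : pu = a := by rw [ha] at hpuP'; exact Multiset.mem_singleton.1 hpuP'
      rw [ha, hpa]
    apply hns (y - 1) (by omega)
    rw [hP'eq, Multiset.filter_singleton, if_pos ⟨hdom.1, le_trans (Nat.sub_le y 1) hdom.2⟩]
    simp
  · intro hcard
    have hcard1 : 1 ≤ P'.card := by
      have : P' ≠ 0 := fun h => by simp [h] at hpuP'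
      exact Multiset.card_pos.2 this
    have hcard2 : 2 ≤ P'.card := Nat.lt_of_le_of_ne hcard1 (Ne.symm hcard)
    have herase1 : 0 < (P'.erase pu).card := by
      rw [Multiset.card_erase_of_mem hpuP']; exact Nat.lt_pred_iff.mpr hcard2
    obtain ⟨q0, hq0⟩ := Multiset.card_pos_iff_exists_mem.1 herase1
    have hlt : ∀ q ∈ P'.erase pu, q.2 < y := by
      intro q hq
      by_contra hge
      push_neg at hge
      have hqP' : q ∈ P' := Multiset.mem_of_mem_erase hq
      have hqx : x ≤ q.1 := by rw [hP'] at hqP'; exact (Multiset.mem_filter.1 hqP').2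
      have hqdom : Dominated (x, y) q := ⟨hqx, hge⟩
      have hle : ({pu, q} : Multiset (ℕ × ℕ)) ≤ P := by
        have hq' : q ∈ P.erase pu := by
          have hle' : P'.erase pu ≤ P.erase pu :=
            Multiset.erase_le_erase pu (by rw [hP']; exact Multiset.filter_le _ _)
          exact Multiset.mem_of_le hle' hq
        calc ({pu, q} : Multiset (ℕ × ℕ)) = pu ::ₘ {q} := rfl
          _ ≤ pu ::ₘ P.erase pu := Multiset.cons_le_cons _ (Multiset.singleton_le.2 hq')
          _ = P := Multiset.cons_erase hpu
      have hfle := Multiset.filter_le_filter (fun p => Dominated (x, y) p) hle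
      have hfeq : ({pu, q} : Multiset (ℕ × ℕ)).filter (fun p => Dominated (x, y) p)
          = {pu, q} := by
        rw [Multiset.filter_eq_self]
        intro a ha
        rcases Multiset.mem_cons.1 ha with h | h
        · rw [h]; exact hdom
        · rw [Multiset.mem_singleton.1 h]; exact hqdom
      have := Multiset.card_le_card hfle
      rw [hfeq] at this
      simp at this
      omega
    have hy1 : 1 ≤ y := lt_of_le_of_lt (Nat.zero_le _) (hlt q0 hq0)
    have hmle : ((P'.erase pu).map Prod.snd).sup ≤ y - 1 := by
      apply Multiset.sup_le.2
      intro b hb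
      obtain ⟨q, hq, rfl⟩ := Multiset.mem_map.1 hb
      have := hlt q hq
      omega
    by_contra hne
    have hm2 : ((P'.erase pu).map Prod.snd).sup + 2 ≤ y := by omega
    apply hns (y - 1) (by omega)
    have hP'cons : P' = pu ::ₘ P'.erase pu := (Multiset.cons_erase hpuP').symm
    rw [hP'cons, Multiset.filter_cons_of_pos _ ⟨hdom.1, le_trans (Nat.sub_le y 1) hdom.2⟩]
    have : (P'.erase pu).filter (fun p => Dominated (x, y - 1) p) = 0 := by
      rw [Multiset.filter_eq_nil]
      intro q hq hqd
      have hqs : q.2 ≤ ((P'.erase pu).map Prod.snd).sup :=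
        Multiset.le_sup (Multiset.mem_map_of_mem Prod.snd hq)
      have := hqd.2
      omega
    rw [this]
    simp
end

section
/- Let λ be a Lyndon word with r = |λ|, and let F = run(λ,e,α,β) and F' = run(λ,e',α',β') with e, e' ≥ 2, 0 ≤ α, β, α', β' < r. If e < e' − 2, then F is a substring of F' but is not a unique substring of F'; that is, |Occ(F,F')| ≥ 2. -/
/-- `e`-fold concatenation of the string `l` with itself. -/
def listPow {α : Type*} (l : List α) : ℕ → List α
  | 0 => []
  | n + 1 => l ++ listPow l n

/-- `run λ e α β = P · λ^e · T` where `P` is the suffix of `λ` of length `α`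
and `T` is the prefix of `λ` of length `β`. -/
def runWord {α : Type*} (lam : List α) (e a b : ℕ) : List α :=
  lam.drop (lam.length - a) ++ listPow lam e ++ lam.take b

/-- The set of occurrences of `F` in `F'`: positions `i` with
`0 ≤ i ≤ |F'| − |F|` and `F = F'[i..i+|F|)`. -/
def occ {α : Type*} [DecidableEq α] (F F' : List α) : Finset ℕ :=
  (Finset.range (F'.length + 1)).filter
    (fun i => i + F.length ≤ F'.length ∧ (F'.drop i).take F.length = F)

/-- A Lyndon word: a nonempty string lexicographically strictly smaller than
every proper nonempty suffix of itself. -/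
def IsLyndon {α : Type*} [LinearOrder α] (l : List α) : Prop :=
  l ≠ [] ∧ ∀ i, 0 < i → i < l.length → l < l.drop i

lemma listPow_length {α : Type*} (l : List α) (n : ℕ) :
    (listPow l n).length = n * l.length := by
  induction n with
  | zero => simp [listPow]
  | succ n ih => simp [listPow, ih, Nat.succ_mul]; ring

lemma listPow_add {α : Type*} (l : List α) (m n : ℕ) :
    listPow l (m + n) = listPow l m ++ listPow l n := by
  induction m with
  | zero => simp [listPow]
  | succ m ih => simp [Nat.succ_add, listPow, ih]

lemma key {α : Type*} (lam : List α) (a b e m : ℕ) (ha : a ≤ lam.length)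
    (hb : b ≤ lam.length) (hm : 1 ≤ m) (T : List α) :
    ((listPow lam (e + 1 + m) ++ T).drop (lam.length - a)).take
      (a + (e * lam.length + b)) = runWord lam e a b := by
  have h1 : listPow lam (e + 1 + m) = lam ++ (listPow lam e ++ listPow lam m) := by
    have : e + 1 + m = 1 + (e + m) := by ring
    rw [this, listPow_add, listPow_add]
    simp [listPow]
  obtain ⟨m', rfl⟩ : ∃ m', m = 1 + m' := ⟨m - 1, by omega⟩
  rw [listPow_add (l := lam) (m := 1) (n := m')] at h1
  simp only [listPow, List.append_nil] at h1
  rw [h1]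
  rw [List.append_assoc, List.drop_append]
  have hdl : (lam.drop (lam.length - a)).length = a := by simp; omega
  rw [show lam.length - a - lam.length = 0 by omega, List.drop_zero]
  rw [List.take_append, hdl,
    List.take_of_length_le (by omega : (lam.drop (lam.length - a)).length ≤ a + (e * lam.length + b)),
    show a + (e * lam.length + b) - a = e * lam.length + b by omega]
  rw [List.append_assoc, List.take_append,
    List.take_of_length_le (by rw [listPow_length]; omega),
    listPow_length, show e * lam.length + b - e * lam.length = b by omega]
  rw [List.append_assoc, List.take_append]
  simp [runWord, show b - lam.length = 0 by omega]

lemma runWord_length {α : Type*} (lam : List α) (e a b : ℕ) (ha : a ≤ lam.length)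
    (hb : b ≤ lam.length) :
    (runWord lam e a b).length = a + (e * lam.length + b) := by
  simp [runWord, listPow_length, Nat.min_eq_left hb]
  omega

theorem run_substring_case_lt {α : Type*} [LinearOrder α]
    (lam : List α) (hlyn : IsLyndon lam) (r : ℕ) (hr : r = lam.length)
    (e e' a b a' b' : ℕ) (he : 2 ≤ e) (he' : 2 ≤ e')
    (ha : a < r) (hb : b < r) (ha' : a' < r) (hb' : b' < r)
    (hcase : e + 2 < e') :
    2 ≤ (occ (runWord lam e a b) (runWord lam e' a' b')).card := by
  subst hr
  set L := lam.length with hL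
  have hL1 : 1 ≤ L := by omega
  obtain ⟨m, hm⟩ : ∃ m, e' = e + 1 + m ∧ 2 ≤ m := ⟨e' - e - 1, by omega, by omega⟩
  obtain ⟨hm1, hm2⟩ := hm
  have hFlen : (runWord lam e a b).length = a + (e * L + b) :=
    runWord_length lam e a b (by omega) (by omega)
  have hF'len : (runWord lam e' a' b').length = a' + (e' * L + b') :=
    runWord_length lam e' a' b' (by omega) (by omega)
  have hP'len : (lam.drop (L - a')).length = a' := by simp; omega
  -- the two occurrence positions
  set i0 := a' + (L - a) with hi0
  set i1 := a' + (L - a) + L with hi1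
  have hmul : e * L + 3 * L ≤ e' * L := by
    calc e * L + 3 * L = (e + 3) * L := by ring
    _ ≤ e' * L := Nat.mul_le_mul_right _ (by omega)
  have hbound0 : i0 + (runWord lam e a b).length ≤ (runWord lam e' a' b').length := by
    rw [hFlen, hF'len]; omega
  have hbound1 : i1 + (runWord lam e a b).length ≤ (runWord lam e' a' b').length := by
    rw [hFlen, hF'len]; omega
  have hdrop0 : (runWord lam e' a' b').drop i0 =
      (listPow lam e' ++ lam.take b').drop (L - a) := by
    unfold runWord
    simp only [← hL]
    rw [List.append_assoc, List.drop_append, hP'len,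
      List.drop_eq_nil_of_le (by rw [hP'len]; omega), show i0 - a' = L - a by omega,
      List.nil_append]
  have hocc0 : i0 ∈ occ (runWord lam e a b) (runWord lam e' a' b') := by
    simp only [occ, Finset.mem_filter, Finset.mem_range]
    refine ⟨by omega, hbound0, ?_⟩
    rw [hdrop0, hFlen, hm1]
    exact key lam a b e m (by omega) (by omega) (by omega) _
  have hocc1 : i1 ∈ occ (runWord lam e a b) (runWord lam e' a' b') := by
    simp only [occ, Finset.mem_filter, Finset.mem_range]
    refine ⟨by omega, hbound1, ?_⟩
    have hdrop1 : (runWord lam e' a' b').drop i1 =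
        (listPow lam (e + 1 + (m - 1)) ++ lam.take b').drop (L - a) := by
      unfold runWord
      simp only [← hL]
      rw [List.append_assoc, List.drop_append, hP'len,
        List.drop_eq_nil_of_le (by rw [hP'len]; omega), show i1 - a' = L + (L - a) by omega,
        List.nil_append]
      rw [show e' = 1 + (e + 1 + (m - 1)) by omega, listPow_add]
      simp only [listPow, List.append_nil, List.append_assoc]
      rw [List.drop_append, List.drop_eq_nil_of_le (by simp [← hL]),
        show L + (L - a) - L = L - a by omega, List.nil_append]
    rw [hdrop1, hFlen]
    exact key lam a b e (m - 1) (by omega) (by omega) (by omega) _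
  have : 1 < (occ (runWord lam e a b) (runWord lam e' a' b')).card :=
    Finset.one_lt_card.mpr ⟨i0, hocc0, i1, hocc1, by omega⟩
  omega
end

section
/- Let Σ = {0,…,σ−1} with σ ≥ 2, let k ≥ 2 be an integer, and let b : Σ → {0,1}^{k−2} be an injective map assigning to each letter a binary string of length k−2. For a ∈ Σ define the binary string π(a) = 0^k · 1 · b(a) · 1 of length 2k, and extend π to strings over Σ by concatenation: π(T) = π(T[0])·π(T[1])···π(T[|T|−1]). Let S be a string of length n ≥ 1 over Σ and let S' = π(S) · 0^k (a binary string of length 2kn + k). Then: (i) for every nonempty string T over Σ, Occ(π(T), S') = {2k·i : i ∈ Occ(T,S)}; in particular, (ii) T is a unique substring of S if and only if π(T) is a unique substring of S'. -/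
/-- The binary encoding `π(a) = 0^k · 1 · b(a) · 1` of a letter `a`. -/
def piLetter {σ : ℕ} (k : ℕ) (b : Fin σ → List Bool) (a : Fin σ) : List Bool :=
  List.replicate k false ++ [true] ++ b a ++ [true]

/-- The letterwise extension of `π` to strings: `π(T) = π(T[0])···π(T[|T|−1])`. -/
def piStr {σ : ℕ} (k : ℕ) (b : Fin σ → List Bool) (T : List (Fin σ)) : List Bool :=
  (T.map (piLetter k b)).flatten

section Aux
variable {σ : ℕ} {k : ℕ} {b : Fin σ → List Bool}

lemma piStr_nil : piStr k b [] = [] := rfl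

lemma piStr_cons (a : Fin σ) (T : List (Fin σ)) :
    piStr k b (a :: T) = piLetter k b a ++ piStr k b T := by
  simp [piStr]

lemma piStr_append (T₁ T₂ : List (Fin σ)) :
    piStr k b (T₁ ++ T₂) = piStr k b T₁ ++ piStr k b T₂ := by
  simp [piStr]

lemma piLetter_length (hk : 2 ≤ k) (hblen : ∀ a, (b a).length = k - 2) (a : Fin σ) :
    (piLetter k b a).length = 2 * k := by
  simp [piLetter, hblen]; omega

lemma piStr_length (hk : 2 ≤ k) (hblen : ∀ a, (b a).length = k - 2) (T : List (Fin σ)) :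
    (piStr k b T).length = 2 * k * T.length := by
  induction T with
  | nil => simp [piStr_nil]
  | cons a T ih =>
      rw [piStr_cons, List.length_append, ih, piLetter_length hk hblen,
        List.length_cons, Nat.mul_add, Nat.mul_one, Nat.add_comm]

lemma piLetter_inj (hbinj : Function.Injective b) :
    Function.Injective (piLetter k b) := by
  intro a a' h
  apply hbinj
  unfold piLetter at h
  have h1 := List.append_cancel_right h
  exact List.append_cancel_left h1

lemma piStr_inj (hk : 2 ≤ k) (hbinj : Function.Injective b)
    (hblen : ∀ a, (b a).length = k - 2) :
    Function.Injective (piStr k b) := by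
  intro T₁
  induction T₁ with
  | nil =>
      intro T₂ h
      cases T₂ with
      | nil => rfl
      | cons a T₂ =>
          exfalso
          have := congrArg List.length h
          rw [piStr_length hk hblen, piStr_length hk hblen] at this
          simp at this
          omega
  | cons a T₁ ih =>
      intro T₂ h
      cases T₂ with
      | nil =>
          exfalso
          have := congrArg List.length h
          rw [piStr_length hk hblen, piStr_length hk hblen] at this
          simp at this
          omega
      | cons a' T₂ =>
          rw [piStr_cons, piStr_cons] at h
          obtain ⟨h1, h2⟩ := List.append_inj h
            (by rw [piLetter_length hk hblen, piLetter_length hk hblen])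
          rw [piLetter_inj hbinj h1, ih h2]

lemma mem_occ_iff {α : Type*} [DecidableEq α] {T S : List α} {i : ℕ} :
    i ∈ occ T S ↔ ∃ u v, S = u ++ T ++ v ∧ u.length = i := by
  constructor
  · intro h
    simp only [occ, Finset.mem_filter, Finset.mem_range] at h
    obtain ⟨-, hle, htake⟩ := h
    refine ⟨S.take i, S.drop (i + T.length), ?_, ?_⟩
    · conv_lhs => rw [← List.take_append_drop i S]
      rw [List.append_assoc]
      congr 1
      conv_lhs => rw [← List.take_append_drop T.length (S.drop i)]
      rw [htake, List.drop_drop]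
    · rw [List.length_take]; omega
  · rintro ⟨u, v, rfl, rfl⟩
    simp only [occ, Finset.mem_filter, Finset.mem_range]
    refine ⟨by simp, by simp, ?_⟩
    rw [List.append_assoc, List.drop_left, List.take_left]

/-- Any position where `0^k · 1` occurs in `π(S) · 0^k` is a multiple of `2k`
pointing at a letter block. -/
lemma zeros_aligned (hk : 2 ≤ k) (hblen : ∀ a, (b a).length = k - 2) :
    ∀ (S : List (Fin σ)) (m : ℕ),
      (List.replicate k false ++ [true]) <+:
        ((piStr k b S ++ List.replicate k false).drop m) →
      ∃ j, m = 2 * k * j ∧ j < S.length := by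
  intro S
  induction S with
  | nil =>
      intro m h
      exfalso
      have hl := h.length_le
      simp [piStr_nil] at hl
      omega
  | cons a S ih =>
      intro m h
      set R : List Bool := piStr k b S ++ List.replicate k false with hR
      have hsplit : piStr k b (a :: S) ++ List.replicate k false = piLetter k b a ++ R := by
        rw [piStr_cons, List.append_assoc]
      rw [hsplit] at h
      set W : List Bool := piLetter k b a ++ R with hW
      rcases Nat.lt_or_ge m (2 * k) with hm | hm
      · -- m < 2k : show m = 0
        rcases Nat.eq_zero_or_pos m with rfl | hm1
        · exact ⟨0, by simp⟩
        · exfalso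
          obtain ⟨t, ht⟩ := h
          -- W.drop m = replicate k false ++ [true] ++ t ... derive getElem? facts
          have hfalse : ∀ i, i < k → W[m + i]? = some false := by
            intro i hi
            rw [← List.getElem?_drop, ← ht, List.append_assoc, List.getElem?_append]
            simp [hi, List.getElem?_replicate]
          -- W[k]? = some true
          have hWk : W[k]? = some true := by
            rw [hW]
            have hlt : k < (piLetter k b a).length := by
              rw [piLetter_length hk hblen]; omega
            rw [List.getElem?_append]
            simp only [hlt, if_pos]
            unfold piLetter
            rw [List.append_assoc, List.append_assoc, List.getElem?_append]
            simp [List.length_replicate]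
          have hW2k : W[2 * k - 1]? = some true := by
            have hsplit2 : W = (List.replicate k false ++ [true] ++ b a) ++ (true :: R) := by
              rw [hW]; unfold piLetter; simp [List.append_assoc]
            have hlen2 : (List.replicate k false ++ [true] ++ b a).length = 2 * k - 1 := by
              simp [hblen]; omega
            rw [hsplit2, List.getElem?_append, hlen2, if_neg (by omega),
              show 2 * k - 1 - (2 * k - 1) = 0 by omega]
            simp
          rcases le_or_gt m k with hmk | hmk
          · have := hfalse (k - m) (by omega)
            rw [show m + (k - m) = k by omega, hWk] at this
            simp at this
          · have := hfalse (2 * k - 1 - m) (by omega)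
            rw [show m + (2 * k - 1 - m) = 2 * k - 1 by omega, hW2k] at this
            simp at this
      · -- m ≥ 2k : use induction hypothesis
        have hdrop : W.drop m = R.drop (m - 2 * k) := by
          rw [hW, List.drop_append]
          have h1 : (piLetter k b a).length = 2 * k := piLetter_length hk hblen a
          rw [List.drop_eq_nil_of_le (by omega), h1]
          simp
        rw [hdrop] at h
        obtain ⟨j, hj, hjlt⟩ := ih (m - 2 * k) h
        exact ⟨j + 1, by rw [Nat.mul_add, Nat.mul_one]; omega, by simp; omega⟩

end Aux

theorem binary_reduction_occurrences {σ : ℕ} (hσ : 2 ≤ σ)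
    (k : ℕ) (hk : 2 ≤ k) (b : Fin σ → List Bool)
    (hbinj : Function.Injective b) (hblen : ∀ a, (b a).length = k - 2)
    (S : List (Fin σ)) (n : ℕ) (hn : S.length = n) (hn1 : 1 ≤ n)
    (S' : List Bool) (hS' : S' = piStr k b S ++ List.replicate k false) :
    (∀ T : List (Fin σ), T ≠ [] →
      occ (piStr k b T) S' = (occ T S).image (fun i => 2 * k * i)) ∧
    (∀ T : List (Fin σ), T ≠ [] →
      ((occ T S).card = 1 ↔ (occ (piStr k b T) S').card = 1)) := by
  have hpart1 : ∀ T : List (Fin σ), T ≠ [] →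
      occ (piStr k b T) S' = (occ T S).image (fun i => 2 * k * i) := by
    intro T hT
    ext m
    simp only [Finset.mem_image]
    constructor
    · intro hm
      rw [mem_occ_iff] at hm
      obtain ⟨U, V, hSplit, hUlen⟩ := hm
      -- π(T) starts with 0^k 1, occurring at position m in S'
      obtain ⟨a, T', rfl⟩ : ∃ a T', T = a :: T' := by
        cases T with
        | nil => exact absurd rfl hT
        | cons a T' => exact ⟨a, T', rfl⟩
      have hpre : (List.replicate k false ++ [true]) <+:
          ((piStr k b S ++ List.replicate k false).drop m) := by
        rw [← hS', hSplit, List.append_assoc, ← hUlen, List.drop_left]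
        refine List.IsPrefix.trans ?_ (List.prefix_append _ _)
        rw [piStr_cons]
        refine List.IsPrefix.trans ?_ (List.prefix_append _ _)
        unfold piLetter
        exact (List.prefix_append _ _).trans (List.prefix_append _ _)
      obtain ⟨i, rfl, hilt⟩ := zeros_aligned hk hblen S m hpre
      refine ⟨i, ?_, rfl⟩
      -- length bound: i + |T| ≤ n
      have hlenS' : S'.length = 2 * k * n + k := by
        rw [hS']; simp [piStr_length hk hblen, hn]
      have hlenSplit : 2 * k * i + 2 * k * (a :: T').length + V.length = 2 * k * n + k := by
        have := congrArg List.length hSplit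
        rw [hlenS'] at this
        simp only [List.length_append, hUlen, piStr_length hk hblen] at this
        omega
      have hile : i + (a :: T').length ≤ n := by
        by_contra hcon
        push_neg at hcon
        have h1 : 2 * k * (n + 1) ≤ 2 * k * (i + (a :: T').length) := by
          exact Nat.mul_le_mul_left _ hcon
        rw [Nat.mul_add, Nat.mul_add, Nat.mul_one] at h1
        omega
      -- extract the matched portion W of S and show T = W
      rw [mem_occ_iff]
      set T := a :: T' with hTdef
      set W := (S.drop i).take T.length with hWdef
      have hWlen : W.length = T.length := by
        rw [hWdef, List.length_take, List.length_drop]; omega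
      have hSdecomp : S = S.take i ++ W ++ S.drop (i + T.length) := by
        conv_lhs => rw [← List.take_append_drop i S]
        rw [List.append_assoc]
        congr 1
        conv_lhs => rw [← List.take_append_drop T.length (S.drop i)]
        rw [List.drop_drop]
      have htake_len : (S.take i).length = i := by
        rw [List.length_take]; omega
      have hS'2 : S' = piStr k b (S.take i) ++
          (piStr k b W ++ (piStr k b (S.drop (i + T.length)) ++ List.replicate k false)) := by
        rw [hS']
        conv_lhs => rw [hSdecomp]
        rw [piStr_append, piStr_append]
        simp [List.append_assoc]
      rw [hSplit, List.append_assoc] at hS'2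
      have hUeq : U.length = (piStr k b (S.take i)).length := by
        rw [piStr_length hk hblen, htake_len, hUlen]
      obtain ⟨-, hrest⟩ := List.append_inj hS'2 hUeq
      have hTW : piStr k b T = piStr k b W := by
        have hlen2 : (piStr k b T).length = (piStr k b W).length := by
          rw [piStr_length hk hblen, piStr_length hk hblen, hWlen]
        exact (List.append_inj hrest hlen2).1
      have hTW' : T = W := piStr_inj hk hbinj hblen hTW
      exact ⟨S.take i, S.drop (i + T.length), by rw [← hTW'] at hSdecomp; exact hSdecomp, htake_len⟩
    · rintro ⟨i, hi, rfl⟩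
      rw [mem_occ_iff] at hi ⊢
      obtain ⟨u, v, rfl, rfl⟩ := hi
      refine ⟨piStr k b u, piStr k b v ++ List.replicate k false, ?_, ?_⟩
      · rw [hS', piStr_append, piStr_append]
        simp [List.append_assoc]
      · rw [piStr_length hk hblen]
  refine ⟨hpart1, ?_⟩
  intro T hT
  rw [hpart1 T hT, Finset.card_image_of_injective _
    (fun x y h => Nat.eq_of_mul_eq_mul_left (by omega) h)]
end

section
/- Let S[0] ≤ S[1] ≤ … ≤ S[N−1] be strings listed in lexicographically nondecreasing order and let f : {0,…,N−1} → {0,1} be a coloring with at least one index of color 1. For an index i with f(i) = 0, define L_p(i) = LCP(S[j],S[i]) where j is the largest index j < i with f(j) = 1 (L_p(i) = 0 if no such j exists), and L_n(i) = LCP(S[i],S[j']) where j' is the smallest index j' > i with f(j') = 1 (L_n(i) = 0 if no such j' exists). Then for every i with f(i) = 0: (a) max_{j : f(j)=1} LCP(S[i],S[j]) = max(L_p(i), L_n(i)); consequently, (b) a string P that is a prefix of S[i] is a prefix of no S[j] with f(j) = 1 if and only if |P| > max(L_p(i), L_n(i)). -/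
section aux
variable {α : Type*} [LinearOrder α]

lemma lcp_cons_cons (x y : α) (s t : List α) :
    lcp (x :: s) (y :: t) = if x = y then lcp s t + 1 else 0 := rfl

lemma lcp_cons_same (x : α) (s t : List α) :
    lcp (x :: s) (x :: t) = lcp s t + 1 := by
  rw [lcp_cons_cons, if_pos rfl]

lemma lcp_comm_s18 (a b : List α) : lcp a b = lcp b a := by
  induction a generalizing b with
  | nil => cases b <;> simp [lcp]
  | cons x s ih =>
    cases b with
    | nil => simp [lcp]
    | cons y t =>
      by_cases h : x = y
      · subst h; simp [lcp, ih]
      · simp [lcp, h, Ne.symm h]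

lemma lcp_le_length_left (a b : List α) : lcp a b ≤ a.length := by
  induction a generalizing b with
  | nil => cases b <;> simp [lcp]
  | cons x s ih =>
    cases b with
    | nil => simp [lcp]
    | cons y t =>
      by_cases h : x = y <;> simp [lcp, h]
      exact ih t

lemma take_lcp (a b : List α) : a.take (lcp a b) = b.take (lcp a b) := by
  induction a generalizing b with
  | nil => cases b <;> simp [lcp]
  | cons x s ih =>
    cases b with
    | nil => simp [lcp]
    | cons y t =>
      by_cases h : x = y
      · subst h; simp [lcp, ih]
      · simp [lcp, h]

lemma prefix_of_le_lcp {P a b : List α} (hP : P <+: a) (h : P.length ≤ lcp a b) :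
    P <+: b := by
  have h1 : P = a.take P.length := List.prefix_iff_eq_take.mp hP
  have h2 : a.take P.length = (a.take (lcp a b)).take P.length := by
    rw [List.take_take, Nat.min_eq_left h]
  rw [take_lcp a b, List.take_take, Nat.min_eq_left h] at h2
  rw [h1, h2]
  exact List.take_prefix _ _

lemma le_lcp_of_prefix {P a b : List α} (ha : P <+: a) (hb : P <+: b) :
    P.length ≤ lcp a b := by
  induction P generalizing a b with
  | nil => simp
  | cons x s ih =>
    obtain ⟨u, rfl⟩ := ha
    obtain ⟨v, rfl⟩ := hb
    have := ih (a := s ++ u) (b := s ++ v) ⟨u, rfl⟩ ⟨v, rfl⟩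
    simp only [List.cons_append, lcp_cons_same, List.length_cons]
    omega

lemma of_cons_le_cons {x y : α} {a b : List α} (h : (x :: a) ≤ (y :: b)) :
    x < y ∨ (x = y ∧ a ≤ b) := by
  rcases lt_trichotomy x y with hx | hx | hx
  · exact Or.inl hx
  · subst hx
    refine Or.inr ⟨rfl, ?_⟩
    by_contra hab
    rw [not_le] at hab
    have hlex : List.Lex (· < ·) b a := hab
    exact absurd (show (x :: b) < (x :: a) from List.Lex.cons hlex) (not_lt.mpr h)
  · exact absurd (show (y :: b) < (x :: a) from List.Lex.rel hx) (not_lt.mpr h)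

lemma lcp_mono {a b c : List α} (hab : a ≤ b) (hbc : b ≤ c) :
    lcp a c ≤ lcp a b ∧ lcp a c ≤ lcp b c := by
  induction a generalizing b c with
  | nil => cases c <;> simp [lcp]
  | cons x s ih =>
    cases c with
    | nil => simp [lcp]
    | cons z u =>
      by_cases hxz : x = z
      · subst hxz
        cases b with
        | nil => exact absurd (List.nil_lt_cons x s) (not_lt.mpr hab)
        | cons y t =>
          rcases of_cons_le_cons hab with h1 | ⟨rfl, hst⟩
          · rcases of_cons_le_cons hbc with h2 | ⟨rfl, htu⟩
            · exact absurd (h1.trans h2) (lt_irrefl _)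
            · exact absurd h1 (lt_irrefl _)
          · rcases of_cons_le_cons hbc with h2 | ⟨_, htu⟩
            · exact absurd h2 (lt_irrefl _)
            · obtain ⟨k1, k2⟩ := ih hst htu
              simp only [lcp_cons_same]
              omega
      · simp [lcp, hxz]
end aux

theorem colored_max_lcp_neighbors {α : Type*} [LinearOrder α]
    (N : ℕ) (S : Fin N → List α)
    (hsorted : ∀ i j : Fin N, i ≤ j → S i ≤ S j)
    (f : Fin N → Bool) (hcol : ∃ j, f j = true)
    (Lp Ln : Fin N → ℕ)
    (hLp : ∀ i (h : (Finset.univ.filter (fun j => f j = true ∧ j < i)).Nonempty),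
      Lp i = lcp (S ((Finset.univ.filter (fun j => f j = true ∧ j < i)).max' h)) (S i))
    (hLp0 : ∀ i, ¬(Finset.univ.filter (fun j => f j = true ∧ j < i)).Nonempty →
      Lp i = 0)
    (hLn : ∀ i (h : (Finset.univ.filter (fun j => f j = true ∧ i < j)).Nonempty),
      Ln i = lcp (S i) (S ((Finset.univ.filter (fun j => f j = true ∧ i < j)).min' h)))
    (hLn0 : ∀ i, ¬(Finset.univ.filter (fun j => f j = true ∧ i < j)).Nonempty →
      Ln i = 0) :
    -- (a) the largest LCP of S[i] with a 1-colored element is max(Lp(i), Ln(i))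
    (∀ i, f i = false →
      (Finset.univ.filter (fun j => f j = true)).sup (fun j => lcp (S i) (S j)) =
        max (Lp i) (Ln i)) ∧
    -- (b) a prefix P of S[i] avoids all 1-colored strings iff it is longer than
    -- max(Lp(i), Ln(i))
    (∀ i, f i = false → ∀ P : List α, P <+: S i →
      ((∀ j, f j = true → ¬ P <+: S j) ↔ max (Lp i) (Ln i) < P.length)) := by
  have key : ∀ i, f i = false → ∀ j, f j = true → lcp (S i) (S j) ≤ max (Lp i) (Ln i) := by
    intro i hi j hj
    have hij : i ≠ j := by intro h; rw [h, hj] at hi; exact absurd hi (by simp)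
    rcases lt_or_gt_of_ne hij with h | h
    · have hne : (Finset.univ.filter (fun j => f j = true ∧ i < j)).Nonempty :=
        ⟨j, Finset.mem_filter.mpr ⟨Finset.mem_univ _, hj, h⟩⟩
      set m := (Finset.univ.filter (fun j => f j = true ∧ i < j)).min' hne with hmdef
      have hmmem := (Finset.univ.filter (fun j => f j = true ∧ i < j)).min'_mem hne
      rw [Finset.mem_filter] at hmmem
      have hmj : m ≤ j := Finset.min'_le _ j (Finset.mem_filter.mpr ⟨Finset.mem_univ _, hj, h⟩)
      have hmono := (lcp_mono (hsorted i m (le_of_lt hmmem.2.2)) (hsorted m j hmj)).1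
      rw [hLn i hne]
      exact le_max_of_le_right hmono
    · have hne : (Finset.univ.filter (fun j => f j = true ∧ j < i)).Nonempty :=
        ⟨j, Finset.mem_filter.mpr ⟨Finset.mem_univ _, hj, h⟩⟩
      set m := (Finset.univ.filter (fun j => f j = true ∧ j < i)).max' hne with hmdef
      have hmmem := (Finset.univ.filter (fun j => f j = true ∧ j < i)).max'_mem hne
      rw [Finset.mem_filter] at hmmem
      have hjm : j ≤ m := Finset.le_max' _ j (Finset.mem_filter.mpr ⟨Finset.mem_univ _, hj, h⟩)
      have hmono := (lcp_mono (hsorted j m hjm) (hsorted m i (le_of_lt hmmem.2.2))).2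
      rw [hLp i hne, lcp_comm_s18]
      exact le_max_of_le_left hmono
  have hLpsup : ∀ i, Lp i ≤ (Finset.univ.filter (fun j => f j = true)).sup
      (fun j => lcp (S i) (S j)) := by
    intro i
    by_cases hne : (Finset.univ.filter (fun j => f j = true ∧ j < i)).Nonempty
    · have hmmem := (Finset.univ.filter (fun j => f j = true ∧ j < i)).max'_mem hne
      rw [Finset.mem_filter] at hmmem
      rw [hLp i hne, lcp_comm_s18]
      exact Finset.le_sup (f := fun j => lcp (S i) (S j))
        (Finset.mem_filter.mpr ⟨Finset.mem_univ _, hmmem.2.1⟩)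
    · rw [hLp0 i hne]; exact Nat.zero_le _
  have hLnsup : ∀ i, Ln i ≤ (Finset.univ.filter (fun j => f j = true)).sup
      (fun j => lcp (S i) (S j)) := by
    intro i
    by_cases hne : (Finset.univ.filter (fun j => f j = true ∧ i < j)).Nonempty
    · have hmmem := (Finset.univ.filter (fun j => f j = true ∧ i < j)).min'_mem hne
      rw [Finset.mem_filter] at hmmem
      rw [hLn i hne]
      exact Finset.le_sup (f := fun j => lcp (S i) (S j))
        (Finset.mem_filter.mpr ⟨Finset.mem_univ _, hmmem.2.1⟩)
    · rw [hLn0 i hne]; exact Nat.zero_le _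
  constructor
  · intro i hi
    apply le_antisymm
    · apply Finset.sup_le
      intro j hj
      exact key i hi j (Finset.mem_filter.mp hj).2
    · exact max_le (hLpsup i) (hLnsup i)
  · intro i hi P hP
    constructor
    · intro hav
      by_contra hle
      rw [not_lt] at hle
      rcases le_max_iff.mp hle with hlen | hlen
      · by_cases hne : (Finset.univ.filter (fun j => f j = true ∧ j < i)).Nonempty
        · have hmmem := (Finset.univ.filter (fun j => f j = true ∧ j < i)).max'_mem hne
          rw [Finset.mem_filter] at hmmem
          rw [hLp i hne, lcp_comm_s18] at hlen
          exact hav _ hmmem.2.1 (prefix_of_le_lcp hP hlen)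
        · rw [hLp0 i hne] at hlen
          obtain ⟨j, hj⟩ := hcol
          have : P = [] := List.length_eq_zero_iff.mp (Nat.le_zero.mp hlen)
          exact hav j hj (this ▸ List.nil_prefix)
      · by_cases hne : (Finset.univ.filter (fun j => f j = true ∧ i < j)).Nonempty
        · have hmmem := (Finset.univ.filter (fun j => f j = true ∧ i < j)).min'_mem hne
          rw [Finset.mem_filter] at hmmem
          rw [hLn i hne] at hlen
          exact hav _ hmmem.2.1 (prefix_of_le_lcp hP hlen)
        · rw [hLn0 i hne] at hlen
          obtain ⟨j, hj⟩ := hcol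
          have : P = [] := List.length_eq_zero_iff.mp (Nat.le_zero.mp hlen)
          exact hav j hj (this ▸ List.nil_prefix)
    · intro hlt j hj hPj
      have h1 := le_lcp_of_prefix hP hPj
      have h2 := key i hi j hj
      omega
end
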